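/- Let (X,σ) be a shift space with h_top(X,σ) = 0 whose language 𝓛 contains a collection 𝓖 ⊆ 𝓛 with (S)-specification with gap size t. Then for every v, w ∈ 𝓖 there exist words y, z ∈ 𝓛_t such that v y w = w z v (in particular v𝓛_t w ∩ w𝓛_t v ≠ ∅). -/

import Mathlib

open MeasureTheory Filter Topology
open scoped ENNReal

/-- The full two-sided shift on `p` symbols. -/
abbrev FullShift (p : ℕ) : Type := ℤ → Fin p

/-- The left shift map. -/
def shiftMap {p : ℕ} : FullShift p → FullShift p := fun x n => x (n + 1)

/-- A (two-sided) shift space: a nonempty closed shift-invariant subset of the full shift. -/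
def IsShiftSpace {p : ℕ} (X : Set (FullShift p)) : Prop :=
  X.Nonempty ∧ IsClosed X ∧ shiftMap '' X = X

/-- `x` spells the word `w` starting at position `k`. -/
def spellsAt {p : ℕ} (x : FullShift p) (k : ℤ) (w : List (Fin p)) : Prop :=
  ∀ i : Fin w.length, x (k + (i : ℕ)) = w.get i

/-- The language of a shift space: all finite words occurring in its sequences. -/
def language {p : ℕ} (X : Set (FullShift p)) : Set (List (Fin p)) :=
  {w | ∃ x ∈ X, ∃ k : ℤ, spellsAt x k w}

/-- Words of length `n` in a collection `D`. -/
def wordsOfLen {p : ℕ} (D : Set (List (Fin p))) (n : ℕ) : Set (List (Fin p)) :=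
  {w ∈ D | w.length = n}

/-- Exponential growth rate `h(D) = limsup (1/n) log #D_n` of a collection of words. -/
noncomputable def growth {p : ℕ} (D : Set (List (Fin p))) : ℝ :=
  Filter.atTop.limsup fun n : ℕ => Real.log ((wordsOfLen D n).ncard) / n

/-- Topological entropy of a shift space (= the growth rate of its language). -/
noncomputable def htop {p : ℕ} (X : Set (FullShift p)) : ℝ := growth (language X)

/-- `glueWords m w v = w 0 ++ v 0 ++ w 1 ++ v 1 ++ ⋯ ++ v (m-1) ++ w m`. -/
def glueWords {p : ℕ} : ℕ → (ℕ → List (Fin p)) → (ℕ → List (Fin p)) → List (Fin p)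
  | 0, w, _ => w 0
  | (m + 1), w, v => glueWords m w v ++ v m ++ w (m + 1)

/-- (S)-specification on `G ⊆ L` with gap size `t`. -/
def HasSpecS {p : ℕ} (L G : Set (List (Fin p))) (t : ℕ) : Prop :=
  ∀ (m : ℕ) (w : ℕ → List (Fin p)), (∀ i ≤ m, w i ∈ G) →
    ∃ v : ℕ → List (Fin p), (∀ i < m, v i ∈ L ∧ (v i).length = t) ∧
      glueWords m w v ∈ L

/-- The central cylinder of a word `w`, starting at position `-⌊|w|/2⌋`. -/
def centralCylinder {p : ℕ} (w : List (Fin p)) : Set (FullShift p) :=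
  {x | spellsAt x (-((w.length / 2 : ℕ) : ℤ)) w}

/-- (Per)-specification on `G` with gap size `t`: the glued word can moreover be realized by
a periodic point of period exactly `|x| + t`. -/
def HasSpecPer {p : ℕ} (X : Set (FullShift p)) (G : Set (List (Fin p))) (t : ℕ) : Prop :=
  ∀ (m : ℕ) (w : ℕ → List (Fin p)), (∀ i ≤ m, w i ∈ G) →
    ∃ v : ℕ → List (Fin p), (∀ i < m, v i ∈ language X ∧ (v i).length = t) ∧
      glueWords m w v ∈ language X ∧
      ∃ z ∈ X, shiftMap^[(glueWords m w v).length + t] z = z ∧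
        z ∈ centralCylinder (glueWords m w v)

/-- A decomposition `L = 𝓒ᵖ 𝓖 𝓒ˢ` of a language. -/
def Decomp {p : ℕ} (L Cp G Cs : Set (List (Fin p))) : Prop :=
  Cp ⊆ L ∧ G ⊆ L ∧ Cs ⊆ L ∧
    ∀ w ∈ L, ∃ u v x, u ∈ Cp ∧ v ∈ G ∧ x ∈ Cs ∧ w = u ++ v ++ x

/-- `𝓖(M)`: words of `L` decomposable with prefix and suffix of length at most `M`. -/
def GM {p : ℕ} (L Cp G Cs : Set (List (Fin p))) (M : ℕ) : Set (List (Fin p)) :=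
  {w ∈ L | ∃ u v x, u ∈ Cp ∧ v ∈ G ∧ x ∈ Cs ∧ u.length ≤ M ∧ x.length ≤ M ∧ w = u ++ v ++ x}

/-- Condition (III): uniformly controlled extension of words of `𝓖(M)` to words of `𝓖`. -/
def CondIII {p : ℕ} (L Cp G Cs : Set (List (Fin p))) : Prop :=
  ∀ M : ℕ, ∃ τ : ℕ, ∀ v ∈ GM L Cp G Cs M,
    ∃ u w : List (Fin p), u.length ≤ τ ∧ w.length ≤ τ ∧ u ++ v ++ w ∈ G

/-- Shift invariance of a measure. -/
def ShiftInvariant {p : ℕ} (μ : Measure (FullShift p)) : Prop :=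
  Measure.map shiftMap μ = μ

/-- Measure-theoretic (Kolmogorov–Sinai) entropy of a shift-invariant measure, computed via
the generating partitions into cylinders of length `n`. -/
noncomputable def entropyOf {p : ℕ} (μ : Measure (FullShift p)) : ℝ :=
  Filter.atTop.liminf fun n : ℕ =>
    (∑ w : Fin n → Fin p,
      Real.negMulLog (μ {x : FullShift p | ∀ i : Fin n, x ((i : ℕ) : ℤ) = w i}).toReal) / n

/-- `μ` is a measure of maximal entropy for the shift space `X`. -/
def IsMME {p : ℕ} (X : Set (FullShift p)) (μ : Measure (FullShift p)) : Prop :=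
  IsProbabilityMeasure μ ∧ ShiftInvariant μ ∧ μ X = 1 ∧ entropyOf μ = htop X

/-- A shift space is intrinsically ergodic if it has exactly one measure of maximal entropy. -/
def IntrinsicallyErgodic {p : ℕ} (X : Set (FullShift p)) : Prop :=
  ∃! μ : Measure (FullShift p), IsMME X μ

/-- The set of points of `X` periodic of period at most `n`. -/
def PerN {p : ℕ} (X : Set (FullShift p)) (n : ℕ) : Set (FullShift p) :=
  {x ∈ X | ∃ k, 1 ≤ k ∧ k ≤ n ∧ shiftMap^[k] x = x}

/-- The measure evenly distributed on the periodic points of period at most `n`. -/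
noncomputable def perMeasure {p : ℕ} (X : Set (FullShift p)) (n : ℕ) :
    Measure (FullShift p) :=
  (((PerN X n).ncard : ℝ≥0∞))⁻¹ •
    Measure.sum (fun x : (PerN X n) => Measure.dirac (x : FullShift p))

/-- Weak* convergence of a sequence of measures. -/
def WeakStarLimit {p : ℕ} (μs : ℕ → Measure (FullShift p)) (μ : Measure (FullShift p)) : Prop :=
  ∀ f : C(FullShift p, ℝ),
    Tendsto (fun n => ∫ x, f x ∂(μs n)) atTop (𝓝 (∫ x, f x ∂μ))

/-- `Y` is a subshift factor of `X`. -/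
def IsSubshiftFactor {p q : ℕ} (X : Set (FullShift p)) (Y : Set (FullShift q)) : Prop :=
  IsShiftSpace Y ∧ ∃ π : FullShift p → FullShift q,
    Continuous π ∧ π '' X = Y ∧ ∀ x ∈ X, π (shiftMap x) = shiftMap (π x)

/-!
If `v` and `w` admitted no fillers `y, z ∈ 𝓛_t` with `v y w = w z v`, glue by specification
`K + 1` blocks, each chosen to be `v _ w _` or `w _ v _`. Every block has length `|v| + |w| + 2t`
whatever the choice, so two gluings whose choices differ at some block `j` have that block at the
same position, and equality of the glued words would give `v y w = w z v`. Hence `𝓛` has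
`2 ^ (K + 1)` distinct words of length at most `(K + 1)(|v| + |w| + 2t)`, and
`h_top(X) ≥ log 2 / (|v| + |w| + 2t) > 0`.
-/

section Growth

variable {p : ℕ}

theorem wordsOfLen_finite (D : Set (List (Fin p))) (n : ℕ) : (wordsOfLen D n).Finite :=
  (List.finite_length_eq (Fin p) n).subset fun _ hw => hw.2

theorem ncard_wordsOfLen_le (D : Set (List (Fin p))) (n : ℕ) : (wordsOfLen D n).ncard ≤ p ^ n :=
  calc (wordsOfLen D n).ncard ≤ {l : List (Fin p) | l.length = n}.ncard :=
        Set.ncard_le_ncard (fun _ hw => hw.2) (List.finite_length_eq (Fin p) n)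
    _ = Nat.card (List.Vector (Fin p) n) := (Nat.card_coe_set_eq _).symm
    _ = p ^ n := by simp [Nat.card_eq_fintype_card, card_vector]

theorem isBoundedUnder_log_ncard_wordsOfLen_div (D : Set (List (Fin p))) :
    IsBoundedUnder (· ≤ ·) atTop fun n : ℕ => Real.log (wordsOfLen D n).ncard / n := by
  refine isBoundedUnder_of ⟨Real.log p, fun n => div_le_of_le_mul₀ n.cast_nonneg
    (Real.log_natCast_nonneg p) ?_⟩
  rcases (wordsOfLen D n).ncard.eq_zero_or_pos with h | h
  · simp [h, mul_nonneg (Real.log_natCast_nonneg p) n.cast_nonneg]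
  · calc Real.log (wordsOfLen D n).ncard ≤ Real.log ((p : ℝ) ^ n) :=
          Real.log_le_log (by exact_mod_cast h) (by exact_mod_cast ncard_wordsOfLen_le D n)
      _ = Real.log p * n := by rw [Real.log_pow, mul_comm]

theorem log_two_div_le_growth {D : Set (List (Fin p))} {B : ℕ} {n : ℕ → ℕ}
    (hn : Tendsto n atTop atTop) (hnB : ∀ k, n k ≤ (k + 1) * B)
    (hD : ∀ k, 2 ^ (k + 1) ≤ (wordsOfLen D (n k)).ncard) :
    Real.log 2 / B ≤ growth D := by
  refine le_limsup_of_frequently_le (hn.frequently (Eventually.frequently ?_))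
    (isBoundedUnder_log_ncard_wordsOfLen_div D)
  filter_upwards [hn.eventually_gt_atTop 0] with k hk
  have hB : (0 : ℝ) < B := by exact_mod_cast Nat.pos_of_mul_pos_left (hk.trans_le (hnB k))
  calc Real.log 2 / B = (k + 1) * Real.log 2 / ((k + 1) * B) := by field_simp
    _ ≤ (k + 1) * Real.log 2 / n k :=
        div_le_div_of_nonneg_left (by positivity) (by exact_mod_cast hk) (by exact_mod_cast hnB k)
    _ = Real.log ((2 : ℝ) ^ (k + 1)) / n k := by rw [Real.log_pow]; push_cast; ring
    _ ≤ Real.log (wordsOfLen D (n k)).ncard / n k := by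
        gcongr
        exact_mod_cast hD k

end Growth

section Glue

variable {p : ℕ} {v w : List (Fin p)}

theorem glueWords_succ_eq_append (m : ℕ) (w v : ℕ → List (Fin p)) :
    glueWords (m + 1) w v =
      w 0 ++ v 0 ++ glueWords m (fun i => w (i + 1)) (fun i => v (i + 1)) := by
  induction m generalizing w v with
  | zero => rfl
  | succ m ih =>
    rw [glueWords, ih]
    simp only [glueWords, List.append_assoc]

def pairedWords (v w : List (Fin p)) (s : ℕ → Bool) : ℕ → List (Fin p)
  | 0 => if s 0 then v else w
  | 1 => if s 0 then w else v
  | i + 2 => pairedWords v w (fun j => s (j + 1)) i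

theorem pairedWords_mem {G : Set (List (Fin p))} (hv : v ∈ G) (hw : w ∈ G) (s : ℕ → Bool)
    (i : ℕ) : pairedWords v w s i ∈ G := by
  fun_induction pairedWords v w s i <;> grind

theorem glueWords_pairedWords_succ (K : ℕ) (s : ℕ → Bool) (f : ℕ → List (Fin p)) :
    glueWords (2 * (K + 1) + 1) (pairedWords v w s) f =
      pairedWords v w s 0 ++ f 0 ++ pairedWords v w s 1 ++ f 1 ++
        glueWords (2 * K + 1) (pairedWords v w fun j => s (j + 1)) fun i => f (i + 2) := by
  rw [show 2 * (K + 1) + 1 = 2 * K + 1 + 1 + 1 by ring, glueWords_succ_eq_append,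
    glueWords_succ_eq_append]
  simp only [List.append_assoc]
  rfl

theorem exists_glueWords_pairedWords_eq_append (K : ℕ) (s : ℕ → Bool)
    (f : ℕ → List (Fin p)) :
    ∃ R, glueWords (2 * K + 1) (pairedWords v w s) f =
      pairedWords v w s 0 ++ f 0 ++ pairedWords v w s 1 ++ R := by
  cases K with
  | zero => exact ⟨[], by simp [glueWords]⟩
  | succ K =>
    rw [glueWords_pairedWords_succ]
    exact ⟨_, List.append_assoc _ _ _⟩

theorem length_glueWords_pairedWords {t : ℕ} (K : ℕ) (s : ℕ → Bool)
    (f : ℕ → List (Fin p)) (hf : ∀ i < 2 * K + 1, (f i).length = t) :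
    (glueWords (2 * K + 1) (pairedWords v w s) f).length =
      (K + 1) * (v.length + w.length) + (2 * K + 1) * t := by
  induction K generalizing s f with
  | zero =>
    cases h : s 0 <;> simp [glueWords, pairedWords, h, hf 0 one_pos] <;> ring
  | succ K ih =>
    rw [glueWords_pairedWords_succ, List.length_append, ih _ _ fun i hi => hf (i + 2) (by omega)]
    cases h : s 0 <;> simp [pairedWords, h, hf 0 (by omega), hf 1 (by omega)] <;> ring

variable {L : Set (List (Fin p))} {t : ℕ}

theorem head_eq_of_glueWords_pairedWords_eq
    (H : ∀ y ∈ wordsOfLen L t, ∀ z ∈ wordsOfLen L t, v ++ y ++ w ≠ w ++ z ++ v) {K : ℕ}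
    {s s' : ℕ → Bool} {f f' : ℕ → List (Fin p)}
    (hf : f 0 ∈ wordsOfLen L t) (hf' : f' 0 ∈ wordsOfLen L t)
    (h : glueWords (2 * K + 1) (pairedWords v w s) f =
      glueWords (2 * K + 1) (pairedWords v w s') f') :
    s 0 = s' 0 := by
  obtain ⟨R, hR⟩ := exists_glueWords_pairedWords_eq_append (v := v) (w := w) K s f
  obtain ⟨R', hR'⟩ := exists_glueWords_pairedWords_eq_append (v := v) (w := w) K s' f'
  rw [hR, hR'] at h
  cases hs : s 0 <;> cases hs' : s' 0 <;> simp only [pairedWords, hs, hs'] at h ⊢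
  · exact (H _ hf' _ hf (List.append_inj_left h.symm (by simp [hf.2, hf'.2]; omega))).elim
  · exact (H _ hf _ hf' (List.append_inj_left h (by simp [hf.2, hf'.2]; omega))).elim

theorem eq_of_glueWords_pairedWords_eq
    (H : ∀ y ∈ wordsOfLen L t, ∀ z ∈ wordsOfLen L t, v ++ y ++ w ≠ w ++ z ++ v) {K : ℕ}
    {s s' : ℕ → Bool} {f f' : ℕ → List (Fin p)}
    (hf : ∀ i < 2 * K + 1, f i ∈ wordsOfLen L t)
    (hf' : ∀ i < 2 * K + 1, f' i ∈ wordsOfLen L t)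
    (h : glueWords (2 * K + 1) (pairedWords v w s) f =
      glueWords (2 * K + 1) (pairedWords v w s') f') :
    ∀ j ≤ K, s j = s' j := by
  induction K generalizing s s' f f' with
  | zero =>
    intro j hj
    rw [Nat.le_zero.mp hj]
    exact head_eq_of_glueWords_pairedWords_eq H (hf 0 (by omega)) (hf' 0 (by omega)) h
  | succ K ih =>
    have h0 := head_eq_of_glueWords_pairedWords_eq H (hf 0 (by omega)) (hf' 0 (by omega)) h
    rintro (_ | j) hj
    · exact h0
    rw [glueWords_pairedWords_succ, glueWords_pairedWords_succ] at h
    have hprefix : (pairedWords v w s 0 ++ f 0 ++ pairedWords v w s 1 ++ f 1).length =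
        (pairedWords v w s' 0 ++ f' 0 ++ pairedWords v w s' 1 ++ f' 1).length := by
      simp only [pairedWords, h0, List.length_append, (hf 0 (by omega)).2, (hf 1 (by omega)).2,
        (hf' 0 (by omega)).2, (hf' 1 (by omega)).2]
    exact ih (fun i hi => hf (i + 2) (by omega)) (fun i hi => hf' (i + 2) (by omega))
      (List.append_inj_right h hprefix) j (by omega)

theorem two_pow_le_ncard_wordsOfLen {G : Set (List (Fin p))} (hspec : HasSpecS L G t)
    (hv : v ∈ G) (hw : w ∈ G)
    (H : ∀ y ∈ wordsOfLen L t, ∀ z ∈ wordsOfLen L t, v ++ y ++ w ≠ w ++ z ++ v) (K : ℕ) :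
    2 ^ (K + 1) ≤ (wordsOfLen L ((K + 1) * (v.length + w.length) + (2 * K + 1) * t)).ncard := by
  let extend (s : Fin (K + 1) → Bool) (i : ℕ) : Bool :=
    if h : i < K + 1 then s ⟨i, h⟩ else false
  choose f hf hglue using fun s =>
    hspec (2 * K + 1) (pairedWords v w (extend s)) fun i _ => pairedWords_mem hv hw _ i
  have hmem (s) : glueWords (2 * K + 1) (pairedWords v w (extend s)) (f s) ∈
      wordsOfLen L ((K + 1) * (v.length + w.length) + (2 * K + 1) * t) :=
    ⟨hglue s, length_glueWords_pairedWords K _ _ fun i hi => (hf s i hi).2⟩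
  have hinj : Set.InjOn (fun s => glueWords (2 * K + 1) (pairedWords v w (extend s)) (f s))
      Set.univ := by
    intro s _ s' _ h
    funext j
    simpa only [extend, dif_pos j.isLt] using
      eq_of_glueWords_pairedWords_eq H (hf s) (hf s') h j (by omega)
  calc 2 ^ (K + 1) = (Set.univ : Set (Fin (K + 1) → Bool)).ncard := by simp
    _ ≤ _ := Set.ncard_le_ncard_of_injOn _ (fun s _ => hmem s) hinj (wordsOfLen_finite L _)

end Glue

theorem commuting_words_of_zero_entropy_general {p : ℕ} (X : Set (FullShift p))
    (h0 : htop X = 0)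
    (G : Set (List (Fin p)))
    (t : ℕ) (hspec : HasSpecS (language X) G t) :
    ∀ v ∈ G, ∀ w ∈ G,
      ∃ y ∈ wordsOfLen (language X) t, ∃ z ∈ wordsOfLen (language X) t,
        v ++ y ++ w = w ++ z ++ v := by
  intro v hv w hw
  by_contra! H
  have hvw : v ≠ w := by
    rintro rfl
    obtain ⟨f, hf, -⟩ := hspec 1 (fun _ => v) fun _ _ => hv
    exact H _ (hf 0 one_pos) _ (hf 0 one_pos) rfl
  have hlen : 0 < v.length + w.length := by
    by_contra! hzero
    exact hvw (by simp_all)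
  have hgrowth := log_two_div_le_growth (D := language X) (B := v.length + w.length + 2 * t)
    (n := fun K => (K + 1) * (v.length + w.length) + (2 * K + 1) * t)
    (tendsto_atTop_mono (fun K => (Nat.le_succ K).trans
      ((Nat.le_mul_of_pos_right _ hlen).trans (Nat.le_add_right _ _))) tendsto_id)
    (fun K => by nlinarith)
    (two_pow_le_ncard_wordsOfLen hspec hv hw H)
  have : 0 < Real.log 2 / (v.length + w.length + 2 * t : ℕ) := by positivity
  exact (hgrowth.trans_eq h0).not_gt this

/-- **Lemma 6.1.** If `X` has zero topological entropy and `𝓖 ⊆ 𝓛` has (S)-specification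
with gap size `t`, then for all `v, w ∈ 𝓖` there exist `y, z ∈ 𝓛_t` with `vyw = wzv`. -/
theorem commuting_words_of_zero_entropy {p : ℕ} (X : Set (FullShift p))
    (hX : IsShiftSpace X) (h0 : htop X = 0)
    (G : Set (List (Fin p))) (hG : G ⊆ language X)
    (t : ℕ) (hspec : HasSpecS (language X) G t) :
    ∀ v ∈ G, ∀ w ∈ G,
      ∃ y ∈ wordsOfLen (language X) t, ∃ z ∈ wordsOfLen (language X) t,
        v ++ y ++ w = w ++ z ++ v :=
  commuting_words_of_zero_entropy_general X h0 G t hspec
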